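/- In max-times algebra, for an n×n nonnegative matrix B with Tr(B) ≤ 1, every vector of the form x = B* ⊗ u with u a nonzero nonnegative vector satisfies B ⊗ x ≤ x; conversely, every positive vector x with B ⊗ x ≤ x can be written as x = B* ⊗ u for some nonzero u (for example u = x). -/

import Mathlib

/-- Maximum of a function over `Fin n` (nonempty since `0 < n`). -/
noncomputable def vmax {n : ℕ} (hn : 0 < n) (f : Fin n → ℝ) : ℝ :=
  Finset.univ.sup' (Finset.univ_nonempty_iff.mpr ⟨⟨0, hn⟩⟩) f

/-- Minimum of a function over `Fin n`. -/
noncomputable def vmin {n : ℕ} (hn : 0 < n) (f : Fin n → ℝ) : ℝ :=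
  Finset.univ.inf' (Finset.univ_nonempty_iff.mpr ⟨⟨0, hn⟩⟩) f

/-- Max-times matrix product. -/
noncomputable def mtProd {n : ℕ} (hn : 0 < n) (X Y : Matrix (Fin n) (Fin n) ℝ) :
    Matrix (Fin n) (Fin n) ℝ :=
  fun i j => vmax hn (fun k => X i k * Y k j)

/-- Max-times matrix powers, `B^0 = I`. -/
noncomputable def mtPow {n : ℕ} (hn : 0 < n) (B : Matrix (Fin n) (Fin n) ℝ) :
    ℕ → Matrix (Fin n) (Fin n) ℝ
  | 0 => fun i j => if i = j then (1 : ℝ) else 0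
  | (k + 1) => mtProd hn B (mtPow hn B k)

/-- Kleene star: entrywise maximum of `B^0, ..., B^(n-1)`. -/
noncomputable def kstar {n : ℕ} (hn : 0 < n) (B : Matrix (Fin n) (Fin n) ℝ) :
    Matrix (Fin n) (Fin n) ℝ :=
  fun i j => vmax hn (fun k : Fin n => mtPow hn B k.1 i j)

/-- Max-times matrix-vector product. -/
noncomputable def mtVec {n : ℕ} (hn : 0 < n) (X : Matrix (Fin n) (Fin n) ℝ)
    (x : Fin n → ℝ) : Fin n → ℝ :=
  fun i => vmax hn (fun j => X i j * x j)

/-!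
`B ⊗ B* ≤ B*` because `B^n ≤ B*`: a path of length `n` visits some vertex twice, the cycle
between the two visits has weight at most `Tr(B) ≤ 1`, and cutting it out leaves a path of length
`< n` of at least the same weight. Hence `B ⊗ (B* ⊗ u) ≤ B* ⊗ u`. Conversely `B ⊗ x ≤ x` gives
`B^k ⊗ x ≤ x` for every `k`, so `B* ⊗ x ≤ x`, and `B* ≥ I` gives the reverse inequality.
-/

section MaxTimes

variable {n : ℕ} (hn : 0 < n)

lemma le_vmax (f : Fin n → ℝ) (j : Fin n) : f j ≤ vmax hn f :=
  Finset.le_sup' f (Finset.mem_univ j)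

lemma vmax_le {f : Fin n → ℝ} {c : ℝ} (h : ∀ j, f j ≤ c) : vmax hn f ≤ c :=
  Finset.sup'_le _ _ fun j _ => h j

lemma exists_vmax_eq (f : Fin n → ℝ) : ∃ j, vmax hn f = f j := by
  obtain ⟨j, -, hj⟩ := Finset.exists_mem_eq_sup' (Finset.univ_nonempty_iff.mpr ⟨⟨0, hn⟩⟩) f
  exact ⟨j, hj⟩

lemma mtVec_mtVec_le {X Y Z : Matrix (Fin n) (Fin n) ℝ} {u : Fin n → ℝ}
    (hu : ∀ j, 0 ≤ u j) (h : ∀ i j l, X i j * Y j l ≤ Z i l) (i : Fin n) :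
    mtVec hn X (mtVec hn Y u) i ≤ mtVec hn Z u i := by
  refine vmax_le hn fun j => ?_
  obtain ⟨l, hl⟩ := exists_vmax_eq hn fun l => Y j l * u l
  calc X i j * mtVec hn Y u j = X i j * Y j l * u l := by rw [mtVec, hl, mul_assoc]
    _ ≤ Z i l * u l := mul_le_mul_of_nonneg_right (h i j l) (hu l)
    _ ≤ mtVec hn Z u i := le_vmax hn (fun l => Z i l * u l) l

lemma exists_lt_le_apply_eq (p : ℕ → Fin n) : ∃ a b, a < b ∧ b ≤ n ∧ p a = p b := by
  obtain ⟨x, hx, y, hy, hxy, hpxy⟩ := Finset.exists_ne_map_eq_of_card_lt_of_maps_to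
    (s := Finset.range (n + 1)) (t := Finset.univ) (f := p) (by simp) (fun _ _ => by simp)
  rw [Finset.mem_range] at hx hy
  rcases hxy.lt_or_gt with h | h
  · exact ⟨x, y, h, by omega, hpxy⟩
  · exact ⟨y, x, h, by omega, hpxy.symm⟩

variable (B : Matrix (Fin n) (Fin n) ℝ)

lemma mtPow_zero_apply (i j : Fin n) : mtPow hn B 0 i j = if i = j then 1 else 0 := rfl

lemma mtPow_succ_apply (m : ℕ) (i j : Fin n) :
    mtPow hn B (m + 1) i j = vmax hn fun l => B i l * mtPow hn B m l j := rfl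

lemma mul_mtPow_le_mtPow_succ (m : ℕ) (i l j : Fin n) :
    B i l * mtPow hn B m l j ≤ mtPow hn B (m + 1) i j :=
  le_vmax hn (fun l => B i l * mtPow hn B m l j) l

lemma mtPow_nonneg (hB : ∀ i j, 0 ≤ B i j) (m : ℕ) (i j : Fin n) : 0 ≤ mtPow hn B m i j := by
  induction m generalizing i with
  | zero => rw [mtPow_zero_apply]; split_ifs <;> norm_num
  | succ m ih => exact (mul_nonneg (hB i j) (ih j)).trans (mul_mtPow_le_mtPow_succ hn B m i j j)

lemma mtPow_mul_mtPow_le_mtPow_add (hB : ∀ i j, 0 ≤ B i j) (a b : ℕ) (i k j : Fin n) :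
    mtPow hn B a i k * mtPow hn B b k j ≤ mtPow hn B (a + b) i j := by
  induction a generalizing i with
  | zero =>
    rw [mtPow_zero_apply, Nat.zero_add]
    split_ifs with hik
    · rw [hik, one_mul]
    · rw [zero_mul]; exact mtPow_nonneg hn B hB b i j
  | succ a ih =>
    obtain ⟨l, hl⟩ := exists_vmax_eq hn fun l => B i l * mtPow hn B a l k
    rw [mtPow_succ_apply, hl, mul_assoc, Nat.succ_add]
    exact (mul_le_mul_of_nonneg_left (ih l) (hB i l)).trans (mul_mtPow_le_mtPow_succ hn B _ i l j)

def pathWeight (p : ℕ → Fin n) (m : ℕ) : ℝ :=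
  ∏ t ∈ Finset.range m, B (p t) (p (t + 1))

lemma pathWeight_add (p : ℕ → Fin n) (m k : ℕ) :
    pathWeight B p (m + k) = pathWeight B p m * pathWeight B (fun t => p (m + t)) k :=
  Finset.prod_range_add _ m k

lemma pathWeight_nonneg (hB : ∀ i j, 0 ≤ B i j) (p : ℕ → Fin n) (m : ℕ) :
    0 ≤ pathWeight B p m :=
  Finset.prod_nonneg fun _ _ => hB _ _

lemma pathWeight_le_mtPow (hB : ∀ i j, 0 ≤ B i j) (m : ℕ) (p : ℕ → Fin n) :
    pathWeight B p m ≤ mtPow hn B m (p 0) (p m) := by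
  induction m generalizing p with
  | zero => simp [pathWeight, mtPow_zero_apply]
  | succ m ih =>
    rw [pathWeight, Finset.prod_range_succ', mul_comm]
    exact (mul_le_mul_of_nonneg_left (ih fun t => p (t + 1)) (hB _ _)).trans
      (mul_mtPow_le_mtPow_succ hn B m _ _ _)

lemma exists_path_of_mtPow_ne_zero (hB : ∀ i j, 0 ≤ B i j) {m : ℕ} {i j : Fin n}
    (h : mtPow hn B m i j ≠ 0) :
    ∃ p : ℕ → Fin n, p 0 = i ∧ p m = j ∧ mtPow hn B m i j ≤ pathWeight B p m := by
  induction m generalizing i with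
  | zero =>
    have hij : i = j := by by_contra hij; simp [mtPow_zero_apply, hij] at h
    exact ⟨fun _ => i, rfl, hij, by simp [pathWeight, mtPow_zero_apply, hij]⟩
  | succ m ih =>
    obtain ⟨l, hl⟩ := exists_vmax_eq hn fun l => B i l * mtPow hn B m l j
    rw [mtPow_succ_apply, hl] at h ⊢
    obtain ⟨p, rfl, hpm, hp⟩ := ih (right_ne_zero_of_mul h)
    refine ⟨fun t => Nat.casesOn t i p, rfl, hpm, ?_⟩
    rw [pathWeight, Finset.prod_range_succ', mul_comm (Finset.prod _ _)]
    exact mul_le_mul_of_nonneg_left hp (hB i (p 0))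

lemma pathWeight_le_mtPow_of_cycle (hB : ∀ i j, 0 ≤ B i j)
    (hTr : ∀ k, 1 ≤ k → k ≤ n → ∀ i, mtPow hn B k i i ≤ 1) (p : ℕ → Fin n) {a b m : ℕ}
    (hab : a < b) (hbm : b ≤ m) (hba : b - a ≤ n) (hcyc : p a = p b) :
    pathWeight B p m ≤ mtPow hn B (m - (b - a)) (p 0) (p m) := by
  obtain ⟨c, rfl⟩ := Nat.exists_eq_add_of_le hab.le
  obtain ⟨r, rfl⟩ := Nat.exists_eq_add_of_le hbm
  rw [show a + c + r - (a + c - a) = a + r by omega, pathWeight_add, pathWeight_add]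
  have hcycle : pathWeight B (fun t => p (a + t)) c ≤ 1 := by
    refine (pathWeight_le_mtPow hn B hB c _).trans ?_
    simpa only [Nat.add_zero, ← hcyc] using hTr c (by omega) (by omega) (p a)
  have hstart := pathWeight_le_mtPow hn B hB a p
  have hend : pathWeight B (fun t => p (a + c + t)) r ≤ mtPow hn B r (p (a + c)) (p (a + c + r)) :=
    pathWeight_le_mtPow hn B hB r _
  have hnonneg := pathWeight_nonneg B hB
  calc _ ≤ pathWeight B p a * pathWeight B (fun t => p (a + c + t)) r :=
        mul_le_mul_of_nonneg_right (mul_le_of_le_one_right (hnonneg _ _) hcycle) (hnonneg _ _)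
    _ ≤ mtPow hn B a (p 0) (p a) * mtPow hn B r (p (a + c)) (p (a + c + r)) :=
        mul_le_mul hstart hend (hnonneg _ _) (mtPow_nonneg hn B hB _ _ _)
    _ ≤ mtPow hn B (a + r) (p 0) (p (a + c + r)) := by
        rw [← hcyc]; exact mtPow_mul_mtPow_le_mtPow_add hn B hB a r _ _ _

lemma exists_kstar_eq_mtPow (i j : Fin n) : ∃ k < n, kstar hn B i j = mtPow hn B k i j := by
  obtain ⟨k, hk⟩ := exists_vmax_eq hn fun k : Fin n => mtPow hn B k i j
  exact ⟨k, k.2, hk⟩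

lemma mtPow_le_kstar_of_lt {m : ℕ} (hm : m < n) (i j : Fin n) : mtPow hn B m i j ≤ kstar hn B i j :=
  le_vmax hn (fun k : Fin n => mtPow hn B k i j) ⟨m, hm⟩

lemma one_le_kstar_self (i : Fin n) : 1 ≤ kstar hn B i i := by
  simpa [mtPow_zero_apply] using mtPow_le_kstar_of_lt hn B hn i i

lemma mtPow_dim_le_kstar (hB : ∀ i j, 0 ≤ B i j)
    (hTr : ∀ k, 1 ≤ k → k ≤ n → ∀ i, mtPow hn B k i i ≤ 1) (i j : Fin n) :
    mtPow hn B n i j ≤ kstar hn B i j := by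
  by_cases h0 : mtPow hn B n i j = 0
  · exact h0 ▸ (mtPow_nonneg hn B hB 0 i j).trans (mtPow_le_kstar_of_lt hn B hn i j)
  obtain ⟨p, rfl, rfl, hp⟩ := exists_path_of_mtPow_ne_zero hn B hB h0
  obtain ⟨a, b, hab, hbn, hpab⟩ := exists_lt_le_apply_eq p
  calc mtPow hn B n (p 0) (p n) ≤ pathWeight B p n := hp
    _ ≤ mtPow hn B (n - (b - a)) (p 0) (p n) :=
      pathWeight_le_mtPow_of_cycle hn B hB hTr p hab hbn (by omega) hpab
    _ ≤ kstar hn B (p 0) (p n) := mtPow_le_kstar_of_lt hn B (by omega) _ _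

lemma mtPow_le_kstar (hB : ∀ i j, 0 ≤ B i j)
    (hTr : ∀ k, 1 ≤ k → k ≤ n → ∀ i, mtPow hn B k i i ≤ 1) {m : ℕ} (hm : m ≤ n) (i j : Fin n) :
    mtPow hn B m i j ≤ kstar hn B i j := by
  rcases hm.lt_or_eq with hm | rfl
  · exact mtPow_le_kstar_of_lt hn B hm i j
  · exact mtPow_dim_le_kstar hn B hB hTr i j

lemma mul_kstar_apply_le (hB : ∀ i j, 0 ≤ B i j)
    (hTr : ∀ k, 1 ≤ k → k ≤ n → ∀ i, mtPow hn B k i i ≤ 1) (i j l : Fin n) :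
    B i j * kstar hn B j l ≤ kstar hn B i l := by
  obtain ⟨k, hk, hkstar⟩ := exists_kstar_eq_mtPow hn B j l
  rw [hkstar]
  exact (mul_mtPow_le_mtPow_succ hn B k i j l).trans (mtPow_le_kstar hn B hB hTr hk i l)

lemma mtPow_mul_le_of_mtVec_le (hB : ∀ i j, 0 ≤ B i j) {x : Fin n → ℝ} (hx : ∀ i, 0 ≤ x i)
    (hBx : ∀ i, mtVec hn B x i ≤ x i) (m : ℕ) (i j : Fin n) : mtPow hn B m i j * x j ≤ x i := by
  induction m generalizing i with
  | zero =>
    rw [mtPow_zero_apply]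
    split_ifs with hij
    · rw [hij, one_mul]
    · rw [zero_mul]; exact hx i
  | succ m ih =>
    obtain ⟨l, hl⟩ := exists_vmax_eq hn fun l => B i l * mtPow hn B m l j
    rw [mtPow_succ_apply, hl, mul_assoc]
    calc B i l * (mtPow hn B m l j * x j) ≤ B i l * x l := mul_le_mul_of_nonneg_left (ih l) (hB i l)
      _ ≤ mtVec hn B x i := le_vmax hn (fun l => B i l * x l) l
      _ ≤ x i := hBx i

lemma mtVec_kstar_eq_of_mtVec_le (hB : ∀ i j, 0 ≤ B i j) {x : Fin n → ℝ} (hx : ∀ i, 0 ≤ x i)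
    (hBx : ∀ i, mtVec hn B x i ≤ x i) : mtVec hn (kstar hn B) x = x := by
  funext i
  refine le_antisymm (vmax_le hn fun j => ?_) ?_
  · obtain ⟨k, -, hkstar⟩ := exists_kstar_eq_mtPow hn B i j
    rw [hkstar]
    exact mtPow_mul_le_of_mtVec_le hn B hB hx hBx k i j
  · calc x i = 1 * x i := (one_mul _).symm
      _ ≤ kstar hn B i i * x i := mul_le_mul_of_nonneg_right (one_le_kstar_self hn B i) (hx i)
      _ ≤ mtVec hn (kstar hn B) x i := le_vmax hn (fun l => kstar hn B i l * x l) i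

end MaxTimes

theorem maxTimes_Bxlex_solutions {n : ℕ} (hn : 0 < n)
    (B : Matrix (Fin n) (Fin n) ℝ)
    (hB : ∀ i j, 0 ≤ B i j)
    (hTr : ∀ k, 1 ≤ k → k ≤ n → ∀ i, mtPow hn B k i i ≤ 1) :
    (∀ u : Fin n → ℝ, (∀ j, 0 ≤ u j) → (∃ j, 0 < u j) →
      ∀ i, mtVec hn B (mtVec hn (kstar hn B) u) i ≤ mtVec hn (kstar hn B) u i) ∧
    (∀ x : Fin n → ℝ, (∀ i, 0 < x i) → (∀ i, mtVec hn B x i ≤ x i) →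
      ∃ u : Fin n → ℝ, (∀ j, 0 ≤ u j) ∧ (∃ j, 0 < u j) ∧
        ∀ i, x i = mtVec hn (kstar hn B) u i) := by
  refine ⟨fun u hu _ => mtVec_mtVec_le hn hu (mul_kstar_apply_le hn B hB hTr), fun x hx hBx => ?_⟩
  have hx0 : ∀ i, 0 ≤ x i := fun i => (hx i).le
  exact ⟨x, hx0, ⟨⟨0, hn⟩, hx _⟩,
    fun i => (congrFun (mtVec_kstar_eq_of_mtVec_le hn B hB hx0 hBx) i).symm⟩
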